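/- arXiv:2605.28967 — 3 statements merged into one kernel-verified Lean document; each statement's English description precedes it below -/
import Mathlib

section
/- Let ρ be a density matrix on a bipartite finite-dimensional system H_A ⊗ H_B and let O be a matrix acting on H_A. Then the one-point fidelity correlator does not increase when the region is enlarged: F(Tr_B ρ, O (Tr_B ρ) O†) ≥ F(ρ, (O ⊗ 1_B) ρ (O ⊗ 1_B)†). -/
noncomputable section

open scoped Matrix Kronecker ComplexOrder

/-- The positive semidefinite square root of a matrix (defaults to `0` if not PSD). -/
noncomputable def matSqrt {n : Type*} [Fintype n] [DecidableEq n] (M : Matrix n n ℂ) :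
    Matrix n n ℂ :=
  open scoped Classical in
  if h : M.PosSemidef then
    (h.1.eigenvectorUnitary : Matrix n n ℂ) * Matrix.diagonal ((↑) ∘ (√·) ∘ h.1.eigenvalues) *
      (star h.1.eigenvectorUnitary : Matrix n n ℂ)
  else 0

/-- The fidelity `F(ρ, σ) = tr √(√ρ σ √ρ)` of two PSD matrices. -/
noncomputable def fidelity {n : Type*} [Fintype n] [DecidableEq n] (ρ σ : Matrix n n ℂ) : ℝ :=
  (matSqrt (matSqrt ρ * σ * matSqrt ρ)).trace.re

/-- The ℓ²→ℓ² operator norm of a complex matrix. -/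
noncomputable def opNorm {m n : Type*} [Fintype m] [Fintype n] [DecidableEq n]
    (M : Matrix m n ℂ) : ℝ :=
  ‖(Matrix.toEuclideanLin.trans LinearMap.toContinuousLinearMap) M‖

/-- Partial trace over the second tensor factor. -/
noncomputable def ptraceB {A B : Type*} [Fintype B]
    (ρ : Matrix (A × B) (A × B) ℂ) : Matrix A A ℂ :=
  Matrix.of fun a a' => ∑ b : B, ρ (a, b) (a', b)

/-!
Write `S = √ρ`, `R = √ρ_A` and `‖Z‖₁ = tr √(Z†Z)`. Then `F(ρ, MρM†) = ‖S M† S‖₁`, and by polar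
decomposition `‖Z‖₁` is the largest value of `Re tr(X† Y Z)` over contractions `X`, `Y`. Take `W`
optimal for `S (O ⊗ 1)† S`; cycling the trace gives `Re tr(Tr_B((WS)† S) O†)`. Stacking the
slices `S (1 ⊗ eᵦ)` into one matrix `V` turns partial traces into products:
`Tr_B((WS)† S) = ((1 ⊗ W) V)† V` and `V†V = ρ_A`, so `V = U R` with `U` a contraction. Hence
`F(ρ, MρM†) = Re tr(((1 ⊗ W) U)† U · R O† R) ≤ ‖R O† R‖₁ = F(ρ_A, O ρ_A O†)`.
-/

open Matrix
open scoped MatrixOrder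

section

variable {k l m n : Type*}

theorem matSqrt_eq_cfc [Fintype n] [DecidableEq n] {M : Matrix n n ℂ} (hM : 0 ≤ M) :
    matSqrt M = cfc Real.sqrt M := by
  rw [nonneg_iff_posSemidef] at hM
  rw [matSqrt, dif_pos hM, hM.1.cfc_eq, IsHermitian.cfc, Unitary.conjStarAlgAut_apply]
  rfl

theorem matSqrt_nonneg [Fintype n] [DecidableEq n] {M : Matrix n n ℂ} (hM : 0 ≤ M) :
    0 ≤ matSqrt M := by
  rw [matSqrt_eq_cfc hM]
  exact cfc_nonneg fun x _ => Real.sqrt_nonneg x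

theorem conjTranspose_matSqrt [Fintype n] [DecidableEq n] {M : Matrix n n ℂ} (hM : 0 ≤ M) :
    (matSqrt M)ᴴ = matSqrt M :=
  (matSqrt_nonneg hM).isSelfAdjoint

theorem continuousOn_spectrum [Fintype n] [DecidableEq n] (f : ℝ → ℝ) (M : Matrix n n ℂ) :
    ContinuousOn f (spectrum ℝ M) :=
  M.finite_real_spectrum.continuousOn f

theorem cfc_mul_cfc [Fintype n] [DecidableEq n] (f g : ℝ → ℝ) (M : Matrix n n ℂ) :
    cfc f M * cfc g M = cfc (fun x => f x * g x) M :=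
  (cfc_mul f g M (continuousOn_spectrum f M) (continuousOn_spectrum g M)).symm

theorem matSqrt_mul_self [Fintype n] [DecidableEq n] {M : Matrix n n ℂ} (hM : 0 ≤ M) :
    matSqrt M * matSqrt M = M := by
  rw [matSqrt_eq_cfc hM, cfc_mul_cfc]
  conv_rhs => rw [← cfc_id' ℝ M]
  exact cfc_congr fun x hx => Real.mul_self_sqrt (spectrum_nonneg_of_nonneg hM hx)

def IsContraction [Fintype m] [DecidableEq n] (X : Matrix m n ℂ) : Prop := Xᴴ * X ≤ 1

theorem IsContraction.mul [Fintype k] [Fintype m] [DecidableEq m] [Fintype n] [DecidableEq n]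
    {X : Matrix k m ℂ} {Y : Matrix m n ℂ} (hX : IsContraction X) (hY : IsContraction Y) :
    IsContraction (X * Y) := by
  unfold IsContraction at *
  rw [le_iff] at *
  have h : 1 - (X * Y)ᴴ * (X * Y) = (1 - Yᴴ * Y) + Yᴴ * (1 - Xᴴ * X) * Y := by
    simp only [conjTranspose_mul, Matrix.mul_sub, Matrix.sub_mul, Matrix.mul_one, Matrix.mul_assoc]
    abel
  rw [h]
  exact hY.add (hX.conjTranspose_mul_mul_same Y)

-- `(√x)⁻¹ * √x` is the indicator of `x ≠ 0`, by the junk value `(√0)⁻¹ = 0`, so this says that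
-- `Y` vanishes on the kernel of `Y†Y`.
theorem mul_cfc_inv_sqrt_mul_sqrt [Fintype m] [Fintype n] [DecidableEq n] (Y : Matrix m n ℂ) :
    Y * cfc (fun x => (√x)⁻¹ * √x) (Yᴴ * Y) = Y := by
  set P := Yᴴ * Y
  have hP : 0 ≤ P := nonneg_iff_posSemidef.mpr (posSemidef_conjTranspose_mul_self Y)
  set E := cfc (fun x => 1 - (√x)⁻¹ * √x) P
  have hE : Eᴴ = E := (cfc_predicate _ P : IsSelfAdjoint E)
  have hYE : Y * E = 0 := by
    rw [← conjTranspose_mul_self_eq_zero, conjTranspose_mul, hE, Matrix.mul_assoc,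
      ← Matrix.mul_assoc Yᴴ]
    change E * (P * E) = 0
    conv_lhs => rw [← cfc_id' ℝ P]
    rw [cfc_mul_cfc, cfc_mul_cfc, ← cfc_zero ℝ P]
    refine cfc_congr fun x hx => ?_
    rcases eq_or_ne (√x) 0 with h | h
    · simp [(Real.sqrt_eq_zero (spectrum_nonneg_of_nonneg hP hx)).mp h]
    · simp [inv_mul_cancel₀ h]
  have hE1 : E = 1 - cfc (fun x => (√x)⁻¹ * √x) P := by
    rw [← cfc_const_one ℝ P]
    exact cfc_sub _ _ P (continuousOn_spectrum _ P) (continuousOn_spectrum _ P)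
  rw [hE1, Matrix.mul_sub, Matrix.mul_one, sub_eq_zero] at hYE
  exact hYE.symm

theorem exists_polar [Fintype m] [Fintype n] [DecidableEq n] (Y : Matrix m n ℂ) :
    ∃ W : Matrix m n ℂ, IsContraction W ∧ Wᴴ * Y = matSqrt (Yᴴ * Y) ∧
      W * matSqrt (Yᴴ * Y) = Y := by
  set P := Yᴴ * Y
  have hP : 0 ≤ P := nonneg_iff_posSemidef.mpr (posSemidef_conjTranspose_mul_self Y)
  set Q := cfc (fun x => (√x)⁻¹) P
  have hQ : Qᴴ = Q := (cfc_predicate _ P : IsSelfAdjoint Q)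
  have hQP : Q * P = matSqrt P := by
    conv_lhs => rw [← cfc_id' ℝ P]
    rw [cfc_mul_cfc, matSqrt_eq_cfc hP]
    exact cfc_congr fun x _ => by simp only [inv_mul_eq_div, Real.div_sqrt]
  refine ⟨Y * Q, ?_, ?_, ?_⟩
  · rw [IsContraction, conjTranspose_mul, hQ, Matrix.mul_assoc, ← Matrix.mul_assoc Yᴴ]
    change Q * (P * Q) ≤ 1
    rw [← Matrix.mul_assoc, hQP, matSqrt_eq_cfc hP, cfc_mul_cfc]
    refine cfc_le_one _ _ fun x _ => ?_
    rcases eq_or_ne (√x) 0 with h | h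
    · simp [h]
    · rw [mul_inv_cancel₀ h]
  · rw [conjTranspose_mul, hQ, Matrix.mul_assoc, hQP]
  · rw [Matrix.mul_assoc, matSqrt_eq_cfc hP, cfc_mul_cfc]
    exact mul_cfc_inv_sqrt_mul_sqrt Y

theorem Matrix.PosSemidef.re_trace_nonneg [Fintype n] {M : Matrix n n ℂ} (hM : M.PosSemidef) :
    0 ≤ M.trace.re :=
  (Complex.nonneg_iff.mp hM.trace_nonneg).1

theorem IsContraction.re_trace_conjTranspose_mul_self_le [Fintype m] [Fintype n] [DecidableEq n]
    [Fintype l] {X : Matrix m n ℂ} (hX : IsContraction X) (G : Matrix n l ℂ) :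
    ((X * G)ᴴ * (X * G)).trace.re ≤ (Gᴴ * G).trace.re := by
  have h := ((le_iff.mp hX).conjTranspose_mul_mul_same G).re_trace_nonneg
  rw [Matrix.mul_sub, Matrix.sub_mul, Matrix.mul_one, trace_sub, Complex.sub_re] at h
  simp only [conjTranspose_mul, Matrix.mul_assoc] at h ⊢
  linarith

theorem IsContraction.re_trace_conjTranspose_mul_le [Fintype m] [Fintype n] [DecidableEq n]
    [Fintype l] {X Y : Matrix m n ℂ} (hX : IsContraction X) (hY : IsContraction Y)
    (G : Matrix n l ℂ) : ((X * G)ᴴ * (Y * G)).trace.re ≤ (Gᴴ * G).trace.re := by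
  set P := X * G
  set Q := Y * G
  have hQP : (Qᴴ * P).trace.re = (Pᴴ * Q).trace.re := by
    rw [← conjTranspose_conjTranspose P, ← conjTranspose_mul, trace_conjTranspose,
      conjTranspose_conjTranspose]
    rfl
  -- `2 Re tr(P† Q) ≤ tr(P† P) + tr(Q† Q)`, from `tr((P - Q)†(P - Q)) ≥ 0`
  have h := (posSemidef_conjTranspose_mul_self (P - Q)).re_trace_nonneg
  simp only [conjTranspose_sub, Matrix.mul_sub, Matrix.sub_mul, trace_sub, Complex.sub_re] at h
  linarith [hX.re_trace_conjTranspose_mul_self_le G, hY.re_trace_conjTranspose_mul_self_le G]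

def traceNorm [Fintype m] [Fintype n] [DecidableEq n] (Y : Matrix m n ℂ) : ℝ :=
  (matSqrt (Yᴴ * Y)).trace.re

theorem re_trace_mul_le_traceNorm [Fintype k] [Fintype l] [DecidableEq l] [Fintype n]
    [DecidableEq n] {X : Matrix k l ℂ} {Y : Matrix k n ℂ} (hX : IsContraction X)
    (hY : IsContraction Y) (Z : Matrix n l ℂ) : (Xᴴ * Y * Z).trace.re ≤ traceNorm Z := by
  obtain ⟨V, hV, -, hVJ⟩ := exists_polar Z
  set J := matSqrt (Zᴴ * Z)
  have hJ : 0 ≤ J :=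
    matSqrt_nonneg (nonneg_iff_posSemidef.mpr (posSemidef_conjTranspose_mul_self Z))
  set G := matSqrt J
  have hG : Gᴴ = G := conjTranspose_matSqrt hJ
  have htr : (Xᴴ * Y * Z).trace = ((X * G)ᴴ * ((Y * V) * G)).trace := by
    rw [← hVJ, ← matSqrt_mul_self hJ, conjTranspose_mul, hG]
    rw [show Xᴴ * Y * (V * (G * G)) = (Xᴴ * Y * V * G) * G by simp only [Matrix.mul_assoc],
      trace_mul_comm]
    simp only [Matrix.mul_assoc]
  calc (Xᴴ * Y * Z).trace.re ≤ (Gᴴ * G).trace.re := by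
        rw [htr]; exact hX.re_trace_conjTranspose_mul_le (hY.mul hV) G
    _ = traceNorm Z := by rw [hG, matSqrt_mul_self hJ]; rfl

theorem fidelity_mul_mul_conjTranspose [Fintype n] [DecidableEq n] {ρ : Matrix n n ℂ}
    (hρ : 0 ≤ ρ) (M : Matrix n n ℂ) :
    fidelity ρ (M * ρ * Mᴴ) = traceNorm (matSqrt ρ * Mᴴ * matSqrt ρ) := by
  rw [fidelity, traceNorm]
  set S := matSqrt ρ
  have hS : Sᴴ = S := conjTranspose_matSqrt hρ
  have hSS : S * S = ρ := matSqrt_mul_self hρ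
  rw [← hSS]
  simp only [conjTranspose_mul, conjTranspose_conjTranspose, hS, Matrix.mul_assoc]

section PartialTrace

variable {A B : Type*}

/-- The slices `X (1 ⊗ eᵦ)` of `X`, stacked on top of each other. -/
def stackB (X : Matrix m (A × B) ℂ) : Matrix (B × m) A ℂ :=
  of fun p a => X p.2 (a, p.1)

theorem ptraceB_conjTranspose_mul [Fintype m] [Fintype B] (X Y : Matrix m (A × B) ℂ) :
    ptraceB (Xᴴ * Y) = (stackB X)ᴴ * stackB Y := by
  ext a a'
  simp [ptraceB, stackB, mul_apply, Fintype.sum_prod_type]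

theorem stackB_mul [Fintype B] [DecidableEq B] [Fintype n] (W : Matrix m n ℂ)
    (X : Matrix n (A × B) ℂ) : stackB (W * X) = ((1 : Matrix B B ℂ) ⊗ₖ W) * stackB X := by
  ext ⟨b, p⟩ a
  simp [stackB, mul_apply, Fintype.sum_prod_type, one_apply]

theorem IsContraction.one_kronecker [Fintype B] [DecidableEq B] [Fintype m] [Fintype n]
    [DecidableEq n]
    {W : Matrix m n ℂ} (hW : IsContraction W) : IsContraction ((1 : Matrix B B ℂ) ⊗ₖ W) := by
  unfold IsContraction at *
  rw [le_iff] at *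
  have h : (1 : Matrix B B ℂ) ⊗ₖ (1 - Wᴴ * W) = 1 ⊗ₖ 1 - 1 ⊗ₖ (Wᴴ * W) := by
    rw [eq_sub_iff_add_eq, ← kronecker_add, sub_add_cancel]
  rw [conjTranspose_kronecker, conjTranspose_one, ← mul_kronecker_mul, Matrix.one_mul,
    ← one_kronecker_one, ← h]
  exact PosSemidef.one.kronecker hW

theorem trace_mul_kronecker_one [Fintype A] [Fintype B] [DecidableEq B]
    (T : Matrix (A × B) (A × B) ℂ) (X : Matrix A A ℂ) :
    (T * (X ⊗ₖ (1 : Matrix B B ℂ))).trace = (ptraceB T * X).trace := by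
  simp [trace, ptraceB, mul_apply, Fintype.sum_prod_type, one_apply, Finset.sum_mul]
  exact Finset.sum_congr rfl fun _ _ => Finset.sum_comm

variable [Fintype A] [DecidableEq A] [Fintype B] [DecidableEq B]

theorem conjTranspose_stackB_matSqrt_mul_self {ρ : Matrix (A × B) (A × B) ℂ} (hρ : 0 ≤ ρ) :
    (stackB (matSqrt ρ))ᴴ * stackB (matSqrt ρ) = ptraceB ρ := by
  rw [← ptraceB_conjTranspose_mul, conjTranspose_matSqrt hρ, matSqrt_mul_self hρ]

theorem ptraceB_nonneg {ρ : Matrix (A × B) (A × B) ℂ} (hρ : 0 ≤ ρ) : 0 ≤ ptraceB ρ := by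
  rw [← conjTranspose_stackB_matSqrt_mul_self hρ, nonneg_iff_posSemidef]
  exact posSemidef_conjTranspose_mul_self _

-- The stacked slices of `√ρ` have Gram matrix `ρ_A`, so polar decomposition writes them as
-- a contraction times `√ρ_A`.
theorem exists_ptraceB_conjTranspose_mul_matSqrt_eq {ρ : Matrix (A × B) (A × B) ℂ} (hρ : 0 ≤ ρ)
    {W : Matrix (A × B) (A × B) ℂ} (hW : IsContraction W) :
    ∃ X Y : Matrix (B × (A × B)) A ℂ, IsContraction X ∧ IsContraction Y ∧
      ptraceB ((W * matSqrt ρ)ᴴ * matSqrt ρ) =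
        matSqrt (ptraceB ρ) * (Xᴴ * Y) * matSqrt (ptraceB ρ) := by
  obtain ⟨U, hU, -, hUR⟩ := exists_polar (stackB (matSqrt ρ))
  rw [conjTranspose_stackB_matSqrt_mul_self hρ] at hUR
  refine ⟨((1 : Matrix B B ℂ) ⊗ₖ W) * U, U, hW.one_kronecker.mul hU, hU, ?_⟩
  rw [ptraceB_conjTranspose_mul, stackB_mul, ← hUR]
  simp only [conjTranspose_mul, conjTranspose_matSqrt (ptraceB_nonneg hρ), Matrix.mul_assoc]

end PartialTrace

end

theorem one_point_fidelity_monotone_under_partial_trace_general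
    {A B : Type*} [Fintype A] [DecidableEq A] [Fintype B] [DecidableEq B]
    (ρ : Matrix (A × B) (A × B) ℂ) (hρ : ρ.PosSemidef)
    (O : Matrix A A ℂ) :
    fidelity ρ ((O ⊗ₖ (1 : Matrix B B ℂ)) * ρ * (O ⊗ₖ (1 : Matrix B B ℂ))ᴴ) ≤
      fidelity (ptraceB ρ) (O * ptraceB ρ * Oᴴ) := by
  rw [← nonneg_iff_posSemidef] at hρ
  obtain ⟨W, hW, hWY, -⟩ := exists_polar (matSqrt ρ * (O ⊗ₖ (1 : Matrix B B ℂ))ᴴ * matSqrt ρ)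
  obtain ⟨X, Y, hX, hY, hXY⟩ := exists_ptraceB_conjTranspose_mul_matSqrt_eq hρ hW
  have hS := conjTranspose_matSqrt hρ
  set S := matSqrt ρ
  set R := matSqrt (ptraceB ρ)
  have key : (Wᴴ * (S * (O ⊗ₖ (1 : Matrix B B ℂ))ᴴ * S)).trace =
      (Xᴴ * Y * (R * Oᴴ * R)).trace :=
    calc _ = ((W * S)ᴴ * S * (Oᴴ ⊗ₖ (1 : Matrix B B ℂ))).trace := by
          rw [conjTranspose_mul, hS, conjTranspose_kronecker, conjTranspose_one]
          conv_rhs => rw [Matrix.mul_assoc, Matrix.mul_assoc, trace_mul_comm]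
          simp only [Matrix.mul_assoc]
      _ = (ptraceB ((W * S)ᴴ * S) * Oᴴ).trace := trace_mul_kronecker_one _ _
      _ = _ := by
          rw [hXY]
          simp only [Matrix.mul_assoc]
          rw [trace_mul_comm]
          simp only [Matrix.mul_assoc]
  rw [fidelity_mul_mul_conjTranspose hρ, fidelity_mul_mul_conjTranspose (ptraceB_nonneg hρ),
    traceNorm, ← hWY, key]
  exact re_trace_mul_le_traceNorm hX hY _

/-- **Monotonicity of the one-point fidelity correlator under partial trace**:
enlarging the region cannot increase the local fidelity correlator. -/
theorem one_point_fidelity_monotone_under_partial_trace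
    {A B : Type*} [Fintype A] [DecidableEq A] [Fintype B] [DecidableEq B]
    (ρ : Matrix (A × B) (A × B) ℂ) (hρ : ρ.PosSemidef) (hρtr : ρ.trace = 1)
    (O : Matrix A A ℂ) :
    fidelity ρ ((O ⊗ₖ (1 : Matrix B B ℂ)) * ρ * (O ⊗ₖ (1 : Matrix B B ℂ))ᴴ) ≤
      fidelity (ptraceB ρ) (O * ptraceB ρ * Oᴴ) :=
  one_point_fidelity_monotone_under_partial_trace_general ρ hρ O
end
end

section
/- Let ρ be a nonzero positive semidefinite complex matrix, let α > 0, and write S := ρ^{α/2} for the positive semidefinite real power of ρ (so tr(S²) = tr(ρ^α) > 0). Let Ω be a finite index set and (O_x)_{x ∈ Ω} matrices of the same size as ρ. Then the connected Rényi-α matrix R_c, defined by [R_c]_{x,y} := tr(S O_x O_y† S O_y O_x†)/tr(S²) − ( tr(S O_x S O_x†)/tr(S²) ) · ( tr(S O_y† S O_y)/tr(S²) ), is a positive semidefinite |Ω| × |Ω| matrix. -/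
noncomputable section

open scoped Matrix Kronecker ComplexOrder

/-- Real power of a matrix via the spectral decomposition (defaults to `0` if not Hermitian). -/
noncomputable def matRpow {n : Type*} [Fintype n] [DecidableEq n]
    (M : Matrix n n ℂ) (β : ℝ) : Matrix n n ℂ :=
  open scoped Classical in
  if h : M.IsHermitian then
    (h.eigenvectorUnitary : Matrix n n ℂ) *
      Matrix.diagonal (fun i => (((h.eigenvalues i) ^ β : ℝ) : ℂ)) *
      (star h.eigenvectorUnitary : Matrix n n ℂ)
  else 0

/-!
Write `P x = (O x)ᴴ S O x`, `T = tr (S S)`, and use the Hilbert–Schmidt inner product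
`⟪A, B⟫ = tr (B Aᴴ)` on matrices. For Hermitian `S` the connected matrix equals
`T⁻¹ (⟪P x, P y⟫ - ⟪P x, S⟫ ⟪S, P y⟫ / ⟪S, S⟫)`, i.e. `T⁻¹ ≥ 0` times the Gram matrix of the
components of the `P x` orthogonal to `S`; when `T = 0` both sides vanish since `x / 0 = 0`.
-/

open scoped InnerProductSpace

namespace Matrix

section InnerProductSpace

variable {𝕜 E ι : Type*} [RCLike 𝕜] [SeminormedAddCommGroup E] [InnerProductSpace 𝕜 E]

theorem posSemidef_inner_sub_inner_mul_inner_div [Finite ι] (p : ι → E) (s : E) :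
    (of fun x y => ⟪p x, p y⟫_𝕜 - ⟪p x, s⟫_𝕜 * ⟪s, p y⟫_𝕜 / ⟪s, s⟫_𝕜).PosSemidef := by
  convert posSemidef_gram 𝕜 fun x => p x - (⟪s, p x⟫_𝕜 / ⟪s, s⟫_𝕜) • s using 1
  ext x y
  simp only [of_apply, gram_apply, inner_sub_left, inner_sub_right, inner_smul_left,
    inner_smul_right, inner_conj_symm, map_div₀]
  rcases eq_or_ne ⟪s, s⟫_𝕜 0 with h | h
  · simp only [h, div_zero, zero_mul, mul_zero, sub_zero]
  · field_simp
    ring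

end InnerProductSpace

variable {n 𝕜 Ω : Type*} [Fintype n] [RCLike 𝕜]

def connectedRenyiMatrix (S : Matrix n n 𝕜) (O : Ω → Matrix n n 𝕜) : Matrix Ω Ω 𝕜 :=
  of fun x y =>
    (S * O x * (O y)ᴴ * S * O y * (O x)ᴴ).trace / (S * S).trace -
      ((S * O x * S * (O x)ᴴ).trace / (S * S).trace) *
        ((S * (O y)ᴴ * S * O y).trace / (S * S).trace)

theorem IsHermitian.posSemidef_connectedRenyiMatrix [Finite Ω] {S : Matrix n n 𝕜}
    (hS : S.IsHermitian) (O : Ω → Matrix n n 𝕜) : (connectedRenyiMatrix S O).PosSemidef := by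
  classical
  let _ := toMatrixSeminormedAddCommGroup (1 : Matrix n n 𝕜) PosSemidef.one
  let _ := toMatrixInnerProductSpace (1 : Matrix n n 𝕜) PosSemidef.one
  have hinner (A B : Matrix n n 𝕜) : ⟪A, B⟫_𝕜 = (B * Aᴴ).trace := by
    show (B * 1 * Aᴴ).trace = _
    rw [Matrix.mul_one]
  set P : Ω → Matrix n n 𝕜 := fun x => (O x)ᴴ * S * O x
  have hP x : (P x).IsHermitian := isHermitian_conjTranspose_mul_mul (O x) hS
  have hR : connectedRenyiMatrix S O = (S * S).trace⁻¹ •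
      of fun x y => ⟪P x, P y⟫_𝕜 - ⟪P x, S⟫_𝕜 * ⟪S, P y⟫_𝕜 / ⟪S, S⟫_𝕜 := by
    ext x y
    have hPP : (S * O x * (O y)ᴴ * S * O y * (O x)ᴴ).trace = (P y * P x).trace := by
      rw [show S * O x * (O y)ᴴ * S * O y * (O x)ᴴ = S * O x * ((O y)ᴴ * S * O y * (O x)ᴴ) by
        simp only [Matrix.mul_assoc], trace_mul_comm]
      simp only [P, Matrix.mul_assoc]
    have hPS : (S * O x * S * (O x)ᴴ).trace = (S * P x).trace := by
      rw [trace_mul_comm, trace_mul_comm S]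
      simp only [P, Matrix.mul_assoc]
    have hSP : (S * (O y)ᴴ * S * O y).trace = (P y * S).trace := by
      rw [show S * (O y)ᴴ * S * O y = S * P y by simp only [P, Matrix.mul_assoc], trace_mul_comm]
    simp only [connectedRenyiMatrix, of_apply, smul_apply, smul_eq_mul, hinner, (hP _).eq, hS.eq,
      hPP, hPS, hSP]
    ring
  rw [hR]
  refine (posSemidef_inner_sub_inner_mul_inner_div P S).smul (inv_nonneg.2 ?_)
  simpa only [hS.eq] using (posSemidef_conjTranspose_mul_self S).trace_nonneg

end Matrix

theorem isHermitian_matRpow {n : Type*} [Fintype n] [DecidableEq n] (M : Matrix n n ℂ) (β : ℝ) :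
    (matRpow M β).IsHermitian := by
  unfold matRpow
  split_ifs
  · rw [Matrix.star_eq_conjTranspose]
    exact Matrix.isHermitian_mul_mul_conjTranspose _ <|
      Matrix.isHermitian_diagonal_of_self_adjoint _ <| funext fun _ => Complex.conj_ofReal _
  · exact Matrix.isHermitian_zero

theorem connected_renyi_matrix_posSemidef_general
    {n : Type*} [Fintype n] [DecidableEq n]
    (ρ : Matrix n n ℂ)
    (α : ℝ)
    (S : Matrix n n ℂ) (hS : S = matRpow ρ (α / 2))
    {Ω : Type*} [Fintype Ω] (O : Ω → Matrix n n ℂ) :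
    (Matrix.of fun x y : Ω =>
        (S * O x * (O y)ᴴ * S * O y * (O x)ᴴ).trace / (S * S).trace -
          ((S * O x * S * (O x)ᴴ).trace / (S * S).trace) *
            ((S * (O y)ᴴ * S * O y).trace / (S * S).trace)).PosSemidef :=
  hS ▸ (isHermitian_matRpow ρ (α / 2)).posSemidef_connectedRenyiMatrix O

/-- **Lemma (connected Rényi-α matrix is positive semidefinite)**. -/
theorem connected_renyi_matrix_posSemidef
    {n : Type*} [Fintype n] [DecidableEq n]
    (ρ : Matrix n n ℂ) (hρ : ρ.PosSemidef) (hρ0 : ρ ≠ 0)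
    (α : ℝ) (hα : 0 < α)
    (S : Matrix n n ℂ) (hS : S = matRpow ρ (α / 2))
    {Ω : Type*} [Fintype Ω] [DecidableEq Ω] (O : Ω → Matrix n n ℂ) :
    (Matrix.of fun x y : Ω =>
        (S * O x * (O y)ᴴ * S * O y * (O x)ᴴ).trace / (S * S).trace -
          ((S * O x * S * (O x)ᴴ).trace / (S * S).trace) *
            ((S * (O y)ᴴ * S * O y).trace / (S * S).trace)).PosSemidef :=
  connected_renyi_matrix_posSemidef_general ρ α S hS O
end
end

section
/- The connected fidelity matrix is not positive semidefinite in general: let ρ := (1/2)·1 be the maximally mixed density matrix on ℂ², and let O₁ := |0⟩⟨0|, O₂ := |+⟩⟨+|, O₃ := |1⟩⟨1|, where |0⟩, |1⟩ is the standard basis and |+⟩ := (|0⟩ + |1⟩)/√2. Then the 3×3 matrix F_c with entries [F_c]_{i,j} := F(ρ, (O_i O_j†) ρ (O_i O_j†)†) − F(ρ, O_i ρ O_i†) · F(ρ, O_j ρ O_j†) equals (1/4) · [[1, √2−1, −1], [√2−1, 1, √2−1], [−1, √2−1, 1]], and for the real vector v = (1, −√2, 1) one has vᵀ F_c v = −(√2−1)²/2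 < 0; in particular F_c is not positive semidefinite. -/
noncomputable section

open scoped Matrix Kronecker ComplexOrder

/-- The maximally mixed state on ℂ². -/
noncomputable def rhoMix : Matrix (Fin 2) (Fin 2) ℂ := ((1 : ℂ) / 2) • 1

/-- The three projectors `|0⟩⟨0|`, `|+⟩⟨+|`, `|1⟩⟨1|`. -/
noncomputable def Ofam : Fin 3 → Matrix (Fin 2) (Fin 2) ℂ :=
  ![!![1, 0; 0, 0], ((1 : ℂ) / 2) • !![1, 1; 1, 1], !![0, 0; 0, 1]]

/-- The connected fidelity matrix of `rhoMix` with respect to the family `Ofam`. -/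
noncomputable def Fc : Matrix (Fin 3) (Fin 3) ℝ :=
  Matrix.of fun i j =>
    fidelity rhoMix ((Ofam i * (Ofam j)ᴴ) * rhoMix * (Ofam i * (Ofam j)ᴴ)ᴴ) -
      fidelity rhoMix (Ofam i * rhoMix * (Ofam i)ᴴ) *
        fidelity rhoMix (Ofam j * rhoMix * (Ofam j)ᴴ)

/-!
Since `ρ = 1/2` is scalar, `√ρ σ √ρ = σ / 2`, and every state that occurs is a nonnegative
multiple of one of the rank-one projections `Oᵢ = |ψᵢ⟩⟨ψᵢ|`: indeed `Oᵢ Oⱼ Oᵢ = |⟨ψᵢ|ψⱼ⟩|² Oᵢ`,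
and `√(c P) = √c P` for a projection `P`. Hence `F(ρ, Oᵢ ρ Oᵢ†) = 1/2` and
`[F_c]ᵢⱼ = |⟨ψᵢ|ψⱼ⟩| / 2 - 1/4`; the overlaps `1, 1/√2, 0` give the matrix, whose quadratic
form is negative at `(1, -√2, 1)`.
-/
open scoped MatrixOrder in
lemma matSqrt_eq_of_mul_self {n : Type*} [Fintype n] [DecidableEq n] {M S : Matrix n n ℂ}
    (hS : S.PosSemidef) (h : S * S = M) : matSqrt M = S := by
  have hM : M.PosSemidef := by
    rw [← h]; nth_rewrite 1 [← hS.1]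
    exact Matrix.posSemidef_conjTranspose_mul_self S
  rw [matSqrt, dif_pos hM]
  rw [← CFC.sqrt_unique h hS.nonneg, CFC.sqrt_eq_real_sqrt M hM.nonneg, cfcₙ_eq_cfc, hM.1.cfc_eq,
    Matrix.IsHermitian.cfc]
  simp [Unitary.conjStarAlgAut_apply, Function.comp_def, Matrix.mul_assoc]

section StarProjection

variable {n : Type*} [Fintype n] [DecidableEq n] {P : Matrix n n ℂ}

open scoped MatrixOrder in
lemma IsStarProjection.matSqrt_smul (hP : IsStarProjection P) {c : ℝ} (hc : 0 ≤ c) :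
    matSqrt ((c : ℂ) • P) = (√c : ℂ) • P := by
  have hPpsd : P.PosSemidef := Matrix.nonneg_iff_posSemidef.mp hP.nonneg
  refine matSqrt_eq_of_mul_self (hPpsd.smul (by positivity)) ?_
  rw [smul_mul_smul_comm, hP.isIdempotentElem.eq, ← Complex.ofReal_mul, Real.mul_self_sqrt hc]

lemma IsStarProjection.fidelity_smul_one_smul (hP : IsStarProjection P) {a b : ℝ}
    (ha : 0 ≤ a) (hb : 0 ≤ b) :
    fidelity ((a : ℂ) • 1) ((b : ℂ) • P) = √(a * b) * P.trace.re := by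
  have hconj : (√a : ℂ) • (1 : Matrix n n ℂ) * ((b : ℂ) • P) * ((√a : ℂ) • 1) =
      ((a * b : ℝ) : ℂ) • P := by
    rw [smul_one_mul, mul_smul_one, smul_smul, smul_smul]
    norm_cast
    congr 1
    linear_combination b * Real.mul_self_sqrt ha
  rw [fidelity, (IsStarProjection.one _).matSqrt_smul ha, hconj, hP.matSqrt_smul (by positivity),
    Matrix.trace_smul, smul_eq_mul, Complex.re_ofReal_mul]

end StarProjection

lemma rhoMix_eq : rhoMix = ((1 / 2 : ℝ) : ℂ) • 1 := by
  rw [rhoMix]; norm_num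

def transitionProb : Matrix (Fin 3) (Fin 3) ℝ :=
  !![1, 1 / 2, 0; 1 / 2, 1, 1 / 2; 0, 1 / 2, 1]

lemma isStarProjection_Ofam (i : Fin 3) : IsStarProjection (Ofam i) := by
  rw [isStarProjection_iff']
  constructor <;> ext a b <;> fin_cases i <;> fin_cases a <;> fin_cases b <;>
    norm_num [Ofam, Matrix.mul_apply, Fin.sum_univ_two]

lemma trace_Ofam (i : Fin 3) : (Ofam i).trace = 1 := by
  fin_cases i <;> norm_num [Ofam, Matrix.trace_fin_two]

lemma Ofam_mul_mul_self (i j : Fin 3) :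
    Ofam i * Ofam j * Ofam i = (transitionProb i j : ℂ) • Ofam i := by
  ext a b
  fin_cases i <;> fin_cases j <;> fin_cases a <;> fin_cases b <;>
    norm_num [Ofam, transitionProb, Matrix.mul_apply, Fin.sum_univ_two]

lemma conjTranspose_Ofam (i : Fin 3) : (Ofam i)ᴴ = Ofam i :=
  (isStarProjection_Ofam i).isSelfAdjoint

lemma Ofam_mul_self (i : Fin 3) : Ofam i * Ofam i = Ofam i :=
  (isStarProjection_Ofam i).isIdempotentElem

lemma fidelity_rhoMix_smul_Ofam (i : Fin 3) {b : ℝ} (hb : 0 ≤ b) :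
    fidelity rhoMix ((b : ℂ) • Ofam i) = √(b / 2) := by
  rw [rhoMix_eq, (isStarProjection_Ofam i).fidelity_smul_one_smul (by norm_num) hb, trace_Ofam]
  norm_num [div_eq_inv_mul]

lemma Fc_apply (i j : Fin 3) : Fc i j = √(transitionProb i j / 4) - 1 / 4 := by
  have hdiag (k : Fin 3) : Ofam k * rhoMix * (Ofam k)ᴴ = ((1 / 2 : ℝ) : ℂ) • Ofam k := by
    rw [rhoMix_eq, mul_smul_one, Matrix.smul_mul, conjTranspose_Ofam, Ofam_mul_self]
  have hoff : (Ofam i * (Ofam j)ᴴ) * rhoMix * (Ofam i * (Ofam j)ᴴ)ᴴ =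
      ((transitionProb i j / 2 : ℝ) : ℂ) • Ofam i := by
    rw [rhoMix_eq, mul_smul_one, Matrix.smul_mul, Matrix.conjTranspose_mul,
      Matrix.conjTranspose_conjTranspose, conjTranspose_Ofam, conjTranspose_Ofam,
      Matrix.mul_assoc, ← Matrix.mul_assoc (Ofam j), Ofam_mul_self, ← Matrix.mul_assoc,
      Ofam_mul_mul_self, smul_smul]
    congr 1
    push_cast
    ring
  have htp : 0 ≤ transitionProb i j := by
    fin_cases i <;> fin_cases j <;> norm_num [transitionProb]
  rw [Fc, Matrix.of_apply, hoff, hdiag, hdiag, fidelity_rhoMix_smul_Ofam _ (by positivity),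
    fidelity_rhoMix_smul_Ofam _ (by norm_num), fidelity_rhoMix_smul_Ofam _ (by norm_num),
    Real.mul_self_sqrt (by norm_num)]
  norm_num [div_div]

lemma Fc_eq : Fc = ((1 : ℝ) / 4) •
    !![1, √2 - 1, -1;
       √2 - 1, 1, √2 - 1;
       -1, √2 - 1, 1] := by
  have hinv : (√2)⁻¹ = √2 / 2 := by
    rw [inv_eq_one_div, div_eq_div_iff (by positivity) two_ne_zero, one_mul,
      Real.mul_self_sqrt zero_le_two]
  ext i j
  fin_cases i <;> fin_cases j <;> simp [Fc_apply, transitionProb, hinv] <;> ring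

lemma dotProduct_Fc_mulVec :
    ![1, -√2, 1] ⬝ᵥ (Fc *ᵥ ![1, -√2, 1]) = -(√2 - 1) ^ 2 / 2 := by
  simp only [Fc_eq, dotProduct, Matrix.mulVec, Fin.sum_univ_three, Matrix.smul_apply,
    Matrix.of_apply, Matrix.cons_val, smul_eq_mul]
  linear_combination -(Real.sq_sqrt zero_le_two) / 4

/-- **The connected fidelity matrix is not positive semidefinite in general**
(Appendix B counterexample). -/
theorem connected_fidelity_not_posSemidef :
    Fc = ((1 : ℝ) / 4) •
        !![1, Real.sqrt 2 - 1, -1;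
           Real.sqrt 2 - 1, 1, Real.sqrt 2 - 1;
           -1, Real.sqrt 2 - 1, 1] ∧
    (![1, -Real.sqrt 2, 1] ⬝ᵥ (Fc *ᵥ ![1, -Real.sqrt 2, 1])) =
      -(Real.sqrt 2 - 1) ^ 2 / 2 ∧
    -(Real.sqrt 2 - 1) ^ 2 / 2 < 0 ∧
    ¬ Fc.PosSemidef := by
  have hneg : -(√2 - 1) ^ 2 / 2 < 0 := by
    have : (1 : ℝ) < √2 := by simpa using Real.sqrt_lt_sqrt zero_le_one one_lt_two
    nlinarith
  refine ⟨Fc_eq, dotProduct_Fc_mulVec, hneg, fun hpsd => ?_⟩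
  have := hpsd.dotProduct_mulVec_nonneg ![1, -√2, 1]
  simp only [star_trivial, dotProduct_Fc_mulVec] at this
  linarith
end
end
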